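/- arXiv:1810.09382 — 5 statements merged into one kernel-verified Lean document; each statement's English description precedes it below -/
import Mathlib

section
/- Let k be a field and let A, B be commutative k-algebras. Let I_A = ker(μ_A : A ⊗_k A → A), I_B = ker(μ_B : B ⊗_k B → B), and let I denote the kernel of the multiplication map (A ⊗_k B) ⊗_k (A ⊗_k B) → A ⊗_k B, regarded as an ideal of (A ⊗_k A) ⊗_k (B ⊗_k B) via the middle-swap isomorphism (A ⊗ B) ⊗ (A ⊗ B) ≅ (A ⊗ A) ⊗ (B ⊗ B). Then there is a short exact sequence of (A ⊗ A) ⊗ (B ⊗ B)-modules 0 → I_A ⊗_k (B ⊗_k B) → I → A ⊗_k I_B → 0, where the first map is induced by the inclusions I_A ⊆ A ⊗ A and B ⊗ B ⊆ B ⊗ B, and the second map is induced by μ_A : A ⊗ A → A on the first factor and the inclusion I_B ⊆ B ⊗ B on the second (here A is an (A ⊗ A)-module via μ_A). -/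
/-!
Under the middle swap, the multiplication of `A ⊗ B` becomes `(id ⊗ μ_B) ∘ (μ_A ⊗ id)`, so `I` is
the kernel of this composite. Over a field everything is flat, so `I_A ⊗ (B ⊗ B) → (A ⊗ A) ⊗ (B ⊗ B)
→ A ⊗ (B ⊗ B)` and `A ⊗ I_B → A ⊗ (B ⊗ B) → A ⊗ B` stay exact, and the kernel of a composite `g ∘ f`
with `f` surjective is an extension of `ker g` by `ker f`.
-/

open TensorProduct

variable (k : Type*) [Field k]
variable (A : Type*) [CommRing A] [Algebra k A]
variable (B : Type*) [CommRing B] [Algebra k B]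

lemma AlgHom.exact_subtype_ker {R S T : Type*} [CommSemiring R] [Ring S] [Semiring T]
    [Algebra R S] [Algebra R T] (f : S →ₐ[R] T) :
    Function.Exact ((RingHom.ker f).subtype.restrictScalars R) f.toLinearMap := fun y => by
  simp [RingHom.mem_ker]

namespace Algebra.TensorProduct

variable (R S T : Type*) [CommSemiring R] [CommSemiring S] [Algebra R S]
  [CommSemiring T] [Algebra R T]

lemma lmul'_comp_tensorTensorTensorComm_symm :
    (lmul' R (S := S ⊗[R] T)).toLinearMap ∘ₗ
        (tensorTensorTensorComm R R R R S T S T).symm.toLinearMap =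
      (lmul' R (S := T)).toLinearMap.lTensor S ∘ₗ
        (lmul' R (S := S)).toLinearMap.rTensor (T ⊗[R] T) := by
  ext a a' b b'
  simp [tensorTensorTensorComm_symm, lmul'_apply_tmul]

lemma mem_map_tensorTensorTensorComm_ker_lmul' {x : (S ⊗[R] S) ⊗[R] (T ⊗[R] T)} :
    x ∈ (RingHom.ker (lmul' R (S := S ⊗[R] T))).map (tensorTensorTensorComm R R R R S T S T) ↔
      (lmul' R (S := T)).toLinearMap.lTensor S
        ((lmul' R (S := S)).toLinearMap.rTensor (T ⊗[R] T) x) = 0 := by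
  rw [Ideal.mem_map_of_equiv, ← LinearMap.comp_apply, ← lmul'_comp_tensorTensorTensorComm_symm,
    LinearMap.comp_apply, AlgEquiv.toLinearMap_apply, AlgHom.toLinearMap_apply, ← RingHom.mem_ker]
  exact ⟨by rintro ⟨z, hz, rfl⟩; rwa [AlgEquiv.symm_apply_apply],
    fun h => ⟨_, h, AlgEquiv.apply_symm_apply _ _⟩⟩

end Algebra.TensorProduct

/-- Let `k` be a field and `A`, `B` commutative `k`-algebras.  Let
`I_A = ker (μ_A : A ⊗ A → A)`, `I_B = ker (μ_B : B ⊗ B → B)`, and let `I` be the kernel of the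
multiplication map of `A ⊗ B`, regarded as an ideal of `(A ⊗ A) ⊗ (B ⊗ B)` via the middle-swap
isomorphism.  Then there is a short exact sequence
`0 → I_A ⊗_k (B ⊗ B) → I → A ⊗_k I_B → 0`,
where the first map `jA` is induced by the inclusions `I_A ⊆ A ⊗ A` and `B ⊗ B ⊆ B ⊗ B`, and
the second map is induced by `μ_A ⊗ id` (with values in `A ⊗ I_B ⊆ A ⊗ (B ⊗ B)`, the inclusion
being `jB`). -/
theorem diagonal_ideal_ses
    (IA : Ideal (A ⊗[k] A)) (hIA : IA = RingHom.ker (Algebra.TensorProduct.lmul' k (S := A)))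
    (IB : Ideal (B ⊗[k] B)) (hIB : IB = RingHom.ker (Algebra.TensorProduct.lmul' k (S := B)))
    (I : Ideal ((A ⊗[k] A) ⊗[k] (B ⊗[k] B)))
    (hI : I = Ideal.map (Algebra.TensorProduct.tensorTensorTensorComm k k k k A B A B)
      (RingHom.ker (Algebra.TensorProduct.lmul' k (S := A ⊗[k] B))))
    (jA : (↥IA ⊗[k] (B ⊗[k] B)) →ₗ[k] (A ⊗[k] A) ⊗[k] (B ⊗[k] B))
    (hjA : jA = TensorProduct.map ((Submodule.subtype IA).restrictScalars k) LinearMap.id)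
    (Φ : ((A ⊗[k] A) ⊗[k] (B ⊗[k] B)) →ₗ[k] A ⊗[k] (B ⊗[k] B))
    (hΦ : Φ = TensorProduct.map (Algebra.TensorProduct.lmul' k (S := A)).toLinearMap
      LinearMap.id)
    (jB : (A ⊗[k] ↥IB) →ₗ[k] A ⊗[k] (B ⊗[k] B))
    (hjB : jB = TensorProduct.map LinearMap.id ((Submodule.subtype IB).restrictScalars k)) :
    Function.Injective jA ∧
    (∀ y ∈ LinearMap.range jA, y ∈ I) ∧
    (∀ x ∈ I, Φ x ∈ LinearMap.range jB) ∧
    (∀ x ∈ I, (Φ x = 0 ↔ x ∈ LinearMap.range jA)) ∧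
    (∀ w : A ⊗[k] ↥IB, ∃ x ∈ I, Φ x = jB w) := by
  subst hIA hIB
  set μB := (Algebra.TensorProduct.lmul' k (S := B)).toLinearMap
  have exactA : Function.Exact jA Φ := by
    rw [hjA, hΦ]
    exact Module.Flat.rTensor_exact _ (AlgHom.exact_subtype_ker _)
  have exactB : Function.Exact jB (μB.lTensor A) := by
    rw [hjB]
    exact Module.Flat.lTensor_exact _ (AlgHom.exact_subtype_ker _)
  have surjΦ : Function.Surjective Φ :=
    hΦ ▸ LinearMap.rTensor_surjective _ fun a => ⟨a ⊗ₜ 1, by simp⟩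
  have memI (x) : x ∈ I ↔ μB.lTensor A (Φ x) = 0 := by
    rw [hI, hΦ]
    exact Algebra.TensorProduct.mem_map_tensorTensorTensorComm_ker_lmul' k A B
  refine ⟨hjA ▸ Module.Flat.rTensor_preserves_injective_linearMap _ Subtype.val_injective,
    ?_, fun x hx => (exactB _).mp ((memI x).mp hx), fun x _ => exactA x, fun w => ?_⟩
  · rintro _ ⟨w, rfl⟩
    rw [memI, exactA.apply_apply_eq_zero, map_zero]
  · obtain ⟨x, hx⟩ := surjΦ (jB w)
    exact ⟨x, (memI x).mpr (hx ▸ exactB.apply_apply_eq_zero w), hx⟩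
end

section
/- Let k be a field and let A, B be commutative k-algebras. With I_A = ker(μ_A : A ⊗_k A → A), I_B = ker(μ_B : B ⊗_k B → B), and I the multiplication kernel of A ⊗_k B regarded as an ideal of R = (A ⊗_k A) ⊗_k (B ⊗_k B) via the middle-swap isomorphism, there is a short exact sequence of R-modules 0 → I_A ⊗_k I_B → (I_A ⊗_k (B ⊗_k B)) ⊕ ((A ⊗_k A) ⊗_k I_B) → I → 0, where the first map is the antidiagonal ξ ↦ (ξ, −ξ) (via the natural inclusions into the two summands) and the second map is the sum of the two maps induced by the inclusions I_A ⊆ A ⊗ A and I_B ⊆ B ⊗ B into R, followed by inclusion into I. -/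
/-! Over a field every module is flat. The middle swap turns `μ_{A ⊗ B}` into `μ_A ⊗ μ_B`, so `I`
is the kernel of `μ_A ⊗ μ_B`, which by right exactness of `⊗` is `I_A ⊗ (B ⊗ B) + (A ⊗ A) ⊗ I_B`.
If `ξ + η = 0` with `ξ ∈ I_A ⊗ (B ⊗ B)` and `η ∈ (A ⊗ A) ⊗ I_B`, then `id ⊗ μ_B` kills `ξ` in
`(A ⊗ A) ⊗ B`, hence already in `I_A ⊗ B`; so `ξ` comes from `I_A ⊗ I_B`, and injectivity of
`(A ⊗ A) ⊗ I_B → R` forces `η = -ξ`. -/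

open TensorProduct LinearMap Function Module

section TensorSquare

variable {R : Type*} [CommRing R]
  {M N P M' N' P' : Type*} [AddCommGroup M] [AddCommGroup N] [AddCommGroup P]
  [AddCommGroup M'] [AddCommGroup N'] [AddCommGroup P']
  [Module R M] [Module R N] [Module R P] [Module R M'] [Module R N'] [Module R P']
  {f : M →ₗ[R] N} {g : N →ₗ[R] P} {f' : M' →ₗ[R] N'} {g' : N' →ₗ[R] P'}

theorem LinearMap.rTensor_lTensor_comm_apply (f : M →ₗ[R] N) (f' : M' →ₗ[R] N')
    (z : M ⊗[R] M') : rTensor N' f (lTensor M f' z) = lTensor N f' (rTensor M' f z) := by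
  rw [← LinearMap.comp_apply, rTensor_comp_lTensor, ← lTensor_comp_rTensor, LinearMap.comp_apply]

theorem Module.Flat.exact_lTensor_prod_neg_rTensor [Flat R M] [Flat R N] [Flat R P']
    (hf : Function.Injective f) (hf' : Function.Injective f') (hfg' : Exact f' g') :
    Exact ((lTensor M f').prod (-rTensor M' f)) ((rTensor N' f).coprod (lTensor N f')) := by
  rintro ⟨x, y⟩
  simp only [coprod_apply, Set.mem_range, Prod.ext_iff, LinearMap.prod_apply, Function.prod_apply,
    LinearMap.neg_apply]
  constructor
  · intro hxy
    have hy : lTensor N f' y = -rTensor N' f x := eq_neg_of_add_eq_zero_right hxy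
    have hx : lTensor M g' x = 0 := by
      apply Flat.rTensor_preserves_injective_linearMap (M := P') f hf
      rw [rTensor_lTensor_comm_apply, map_zero, ← neg_eq_zero, ← map_neg, ← hy,
        ← LinearMap.comp_apply, ← lTensor_comp, hfg'.linearMap_comp_eq_zero, lTensor_zero,
        LinearMap.zero_apply]
    obtain ⟨z, rfl⟩ := (Flat.lTensor_exact M hfg' x).mp hx
    refine ⟨z, rfl, Flat.lTensor_preserves_injective_linearMap (M := N) f' hf' ?_⟩
    rw [map_neg, ← rTensor_lTensor_comm_apply, hy]
  · rintro ⟨z, rfl, rfl⟩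
    rw [map_neg, rTensor_lTensor_comm_apply, add_neg_cancel]

theorem TensorProduct.ker_map_eq_range_rTensor_coprod_lTensor (hfg : Exact f g)
    (hg : Surjective g) (hfg' : Exact f' g') (hg' : Surjective g') :
    ker (map g g') = range ((rTensor N' f).coprod (lTensor N f')) := by
  rw [map_ker hfg hg hfg' hg', range_coprod, sup_comm]

end TensorSquare

theorem AlgHom.exact_restrictScalars_subtype_ker {R S T : Type*} [CommSemiring R] [Semiring S]
    [Semiring T] [Algebra R S] [Algebra R T] (φ : S →ₐ[R] T) :
    Exact ((RingHom.ker φ).subtype.restrictScalars R) φ.toLinearMap := by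
  intro x
  simp [RingHom.mem_ker]

theorem Algebra.TensorProduct.lmul'_surjective (R S : Type*) [CommSemiring R] [CommSemiring S]
    [Algebra R S] : Surjective (Algebra.TensorProduct.lmul' R (S := S)) :=
  fun s => ⟨s ⊗ₜ 1, by simp⟩

theorem Algebra.TensorProduct.mem_map_tensorTensorTensorComm_ker_lmul'_iff
    (R S T : Type*) [CommSemiring R] [CommSemiring S] [Algebra R S] [CommSemiring T] [Algebra R T]
    (x : (S ⊗[R] S) ⊗[R] (T ⊗[R] T)) :
    x ∈ Ideal.map (tensorTensorTensorComm R R R R S T S T) (RingHom.ker (lmul' R (S := S ⊗[R] T)))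
      ↔ _root_.TensorProduct.map (lmul' R (S := S)).toLinearMap (lmul' R (S := T)).toLinearMap x = 0 := by
  set e := tensorTensorTensorComm R R R R S T S T
  have hmul : ∀ w, lmul' R w = _root_.TensorProduct.map (lmul' R (S := S)).toLinearMap
      (lmul' R (S := T)).toLinearMap (e w) := fun w => by
    simp only [← AlgHom.toLinearMap_apply, lmul'_toLinearMap, LinearMap.mul'_tensor]
    rfl
  obtain ⟨w, rfl⟩ := e.surjective x
  rw [← hmul, Ideal.mem_map_of_equiv]
  exact ⟨fun ⟨v, hv, hvw⟩ => e.injective hvw ▸ hv, fun hw => ⟨w, hw, rfl⟩⟩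

variable (k : Type*) [Field k]
variable (A : Type*) [CommRing A] [Algebra k A]
variable (B : Type*) [CommRing B] [Algebra k B]

/-- Let `k` be a field and `A`, `B` commutative `k`-algebras.  With
`I_A = ker μ_A`, `I_B = ker μ_B`, and `I` the multiplication kernel of `A ⊗ B` regarded as an
ideal of `R = (A ⊗ A) ⊗ (B ⊗ B)` via the middle-swap isomorphism, there is a short exact
sequence of `R`-modules
`0 → I_A ⊗ I_B → (I_A ⊗ (B ⊗ B)) ⊕ ((A ⊗ A) ⊗ I_B) → I → 0`,
where the first map is the antidiagonal `ξ ↦ (ξ, −ξ)` (via the natural inclusions) and the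
second is the sum of the maps induced by the inclusions `I_A ⊆ A ⊗ A` and `I_B ⊆ B ⊗ B`. -/
theorem diagonal_ideal_ses'
    (IA : Ideal (A ⊗[k] A)) (hIA : IA = RingHom.ker (Algebra.TensorProduct.lmul' k (S := A)))
    (IB : Ideal (B ⊗[k] B)) (hIB : IB = RingHom.ker (Algebra.TensorProduct.lmul' k (S := B)))
    (I : Ideal ((A ⊗[k] A) ⊗[k] (B ⊗[k] B)))
    (hI : I = Ideal.map (Algebra.TensorProduct.tensorTensorTensorComm k k k k A B A B)
      (RingHom.ker (Algebra.TensorProduct.lmul' k (S := A ⊗[k] B))))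
    (δ : (↥IA ⊗[k] ↥IB) →ₗ[k] (↥IA ⊗[k] (B ⊗[k] B)) × ((A ⊗[k] A) ⊗[k] ↥IB))
    (hδ : ∀ z : ↥IA ⊗[k] ↥IB, δ z =
      (TensorProduct.map LinearMap.id ((Submodule.subtype IB).restrictScalars k) z,
       - TensorProduct.map ((Submodule.subtype IA).restrictScalars k) LinearMap.id z))
    (σ : ((↥IA ⊗[k] (B ⊗[k] B)) × ((A ⊗[k] A) ⊗[k] ↥IB)) →ₗ[k]
      (A ⊗[k] A) ⊗[k] (B ⊗[k] B))
    (hσ : σ = LinearMap.coprod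
      (TensorProduct.map ((Submodule.subtype IA).restrictScalars k) LinearMap.id)
      (TensorProduct.map LinearMap.id ((Submodule.subtype IB).restrictScalars k))) :
    Function.Injective δ ∧
    (∀ p : (↥IA ⊗[k] (B ⊗[k] B)) × ((A ⊗[k] A) ⊗[k] ↥IB),
      σ p = 0 ↔ p ∈ LinearMap.range δ) ∧
    (∀ x : (A ⊗[k] A) ⊗[k] (B ⊗[k] B), x ∈ I ↔ x ∈ LinearMap.range σ) := by
  subst hIA hIB hI hσ
  obtain rfl : δ = (lTensor _ ((Submodule.subtype _).restrictScalars k)).prod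
      (-rTensor _ ((Submodule.subtype _).restrictScalars k)) := LinearMap.ext hδ
  have hexA := (Algebra.TensorProduct.lmul' k (S := A)).exact_restrictScalars_subtype_ker
  have hexB := (Algebra.TensorProduct.lmul' k (S := B)).exact_restrictScalars_subtype_ker
  refine ⟨fun u v huv => ?_, fun p => ?_, fun x => ?_⟩
  · exact Flat.lTensor_preserves_injective_linearMap _ Subtype.val_injective congr(($huv).1)
  · rw [LinearMap.mem_range]
    exact Flat.exact_lTensor_prod_neg_rTensor Subtype.val_injective Subtype.val_injective hexB p
  · rw [Algebra.TensorProduct.mem_map_tensorTensorTensorComm_ker_lmul'_iff, ← LinearMap.mem_ker,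
      ker_map_eq_range_rTensor_coprod_lTensor hexA (Algebra.TensorProduct.lmul'_surjective k A)
        hexB (Algebra.TensorProduct.lmul'_surjective k B)]
    exact Iff.rfl
end

section
/- Let k be a field, let A be a commutative k-algebra, let J ⊆ A be an ideal, and set Ā = A/J. Let I = ker(μ_A : A ⊗_k A → A) and let J̃ = ker(Ā ⊗_k A → Ā), where Ā ⊗_k A → Ā is the map ā ⊗ b ↦ ā · b̄. Then the natural map I ⊗_{A ⊗ A} (Ā ⊗ A) → Ā ⊗_k A induced by A ⊗ A → Ā ⊗ A is injective with image J̃; that is, it induces a canonical isomorphism I ⊗_{A ⊗ A} (Ā ⊗ A) ≅ J̃. -/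
set_option synthInstance.maxHeartbeats 1000000
set_option maxHeartbeats 1000000

open TensorProduct

variable (k : Type*) [Field k]
variable (A : Type*) [CommRing A] [Algebra k A]
variable (J : Ideal A)

/-- Let `k` be a field, `A` a commutative `k`-algebra, `J ⊆ A` an ideal and
`Ā = A/J`.  Let `I = ker (μ_A : A ⊗ A → A)` and `J̃ = ker (Ā ⊗_k A → Ā)`, where
`Ā ⊗_k A → Ā` is `ā ⊗ b ↦ ā·b̄`.  Then the natural map
`I ⊗_{A ⊗ A} (Ā ⊗ A) → Ā ⊗_k A` induced by `A ⊗ A → Ā ⊗ A` is injective with image `J̃`. -/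
theorem restricted_diagonal_ideal_eq_graph_ideal :
    letI : Algebra (A ⊗[k] A) ((A ⧸ J) ⊗[k] A) :=
      (Algebra.TensorProduct.map (Ideal.Quotient.mkₐ k J) (AlgHom.id k A)).toRingHom.toAlgebra
    ∀ (I : Ideal (A ⊗[k] A)),
      I = RingHom.ker (Algebra.TensorProduct.lmul' k (S := A)) →
    ∀ θ : (↥I ⊗[A ⊗[k] A] ((A ⧸ J) ⊗[k] A)) →ₗ[A ⊗[k] A] ((A ⧸ J) ⊗[k] A),
      θ = TensorProduct.lift
        ((LinearMap.lsmul (A ⊗[k] A) ((A ⧸ J) ⊗[k] A)).comp (Submodule.subtype I)) →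
    Function.Injective θ ∧
      (∀ y : (A ⧸ J) ⊗[k] A,
        y ∈ RingHom.ker ((Algebra.TensorProduct.lmul' k (S := A ⧸ J)).comp
          (Algebra.TensorProduct.map (AlgHom.id k (A ⧸ J)) (Ideal.Quotient.mkₐ k J))) ↔
        ∃ s, θ s = y) := by
  intro I hI θ hθ
  letI : Algebra (A ⊗[k] A) ((A ⧸ J) ⊗[k] A) :=
    (Algebra.TensorProduct.map (Ideal.Quotient.mkₐ k J) (AlgHom.id k A)).toRingHom.toAlgebra
  -- θ on pure tensors
  have hθt : ∀ (x : ↥I) (b : (A ⧸ J) ⊗[k] A),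
      θ (x ⊗ₜ[A ⊗[k] A] b)
        = Algebra.TensorProduct.map (Ideal.Quotient.mkₐ k J) (AlgHom.id k A)
            (x : A ⊗[k] A) * b := by
    intro x b
    rw [hθ, TensorProduct.lift.tmul]
    rfl
  have hsmul : ∀ (r : A ⊗[k] A) (b : (A ⧸ J) ⊗[k] A),
      r • b = Algebra.TensorProduct.map (Ideal.Quotient.mkₐ k J) (AlgHom.id k A) r * b :=
    fun r b => rfl
  -- surjectivity
  have hsurj : Function.Surjective
      (Algebra.TensorProduct.map (Ideal.Quotient.mkₐ k J) (AlgHom.id k A)) := by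
    intro b
    induction b using TensorProduct.induction_on with
    | zero => exact ⟨0, map_zero _⟩
    | tmul p a =>
        obtain ⟨p', rfl⟩ := Ideal.Quotient.mk_surjective p
        exact ⟨p' ⊗ₜ a, by simp [Algebra.TensorProduct.map_tmul, Ideal.Quotient.mkₐ_eq_mk]⟩
    | add x y hx hy =>
        obtain ⟨x', rfl⟩ := hx
        obtain ⟨y', rfl⟩ := hy
        exact ⟨x' + y', map_add _ _ _⟩
  -- every element of I ⊗ B is x ⊗ₜ 1
  have gen : ∀ t : ↥I ⊗[A ⊗[k] A] ((A ⧸ J) ⊗[k] A),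
      ∃ x : ↥I, x ⊗ₜ[A ⊗[k] A] (1 : (A ⧸ J) ⊗[k] A) = t := by
    intro t
    induction t using TensorProduct.induction_on with
    | zero => exact ⟨0, by simp⟩
    | tmul x b =>
        obtain ⟨r, rfl⟩ := hsurj b
        refine ⟨r • x, ?_⟩
        rw [smul_tmul]
        congr 1
        rw [hsmul, mul_one]
    | add x y hx hy =>
        obtain ⟨x', rfl⟩ := hx
        obtain ⟨y', rfl⟩ := hy
        exact ⟨x' + y', add_tmul _ _ _⟩
  -- membership of the standard elements
  have pf : ∀ z : A ⊗[k] A,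
      z - (Algebra.TensorProduct.lmul' k (S := A) z) ⊗ₜ[k] (1 : A) ∈ I := by
    intro z
    rw [hI, RingHom.mem_ker, map_sub, Algebra.TensorProduct.lmul'_apply_tmul, mul_one,
      sub_self]
  -- commutation
  have hcomm : ∀ z : A ⊗[k] A,
      ((Algebra.TensorProduct.lmul' k (S := A ⧸ J)).comp
          (Algebra.TensorProduct.map (AlgHom.id k (A ⧸ J)) (Ideal.Quotient.mkₐ k J)))
        (Algebra.TensorProduct.map (Ideal.Quotient.mkₐ k J) (AlgHom.id k A) z)
        = Ideal.Quotient.mk J (Algebra.TensorProduct.lmul' k (S := A) z) := by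
    intro z
    induction z using TensorProduct.induction_on with
    | zero => simp
    | tmul a b =>
        simp [Algebra.TensorProduct.map_tmul, Algebra.TensorProduct.lmul'_apply_tmul,
          Ideal.Quotient.mkₐ_eq_mk, map_mul]
    | add x y hx hy => simp only [map_add, hx, hy]
  -- exactness
  have hexact : Function.Exact (Submodule.subtype (J.restrictScalars k))
      (Ideal.Quotient.mkₐ k J).toLinearMap := by
    intro y
    constructor
    · intro hy
      have : y ∈ J := by rwa [← Ideal.Quotient.eq_zero_iff_mem]
      exact ⟨⟨y, this⟩, rfl⟩
    · rintro ⟨⟨x, hx⟩, rfl⟩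
      exact Ideal.Quotient.eq_zero_iff_mem.mpr hx
  have hex2 := Module.Flat.rTensor_exact A hexact
  have hf'rt : ∀ z : A ⊗[k] A,
      (LinearMap.rTensor A (Ideal.Quotient.mkₐ k J).toLinearMap) z
        = Algebra.TensorProduct.map (Ideal.Quotient.mkₐ k J) (AlgHom.id k A) z := by
    intro z
    induction z using TensorProduct.induction_on with
    | zero => simp
    | tmul a b => simp [LinearMap.rTensor_tmul, Algebra.TensorProduct.map_tmul]
    | add x y hx hy => simp only [map_add, hx, hy]
  -- key vanishing
  have key : ∀ t : ↥(J.restrictScalars k) ⊗[k] A,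
      (⟨LinearMap.rTensor A (Submodule.subtype (J.restrictScalars k)) t
          - (Algebra.TensorProduct.lmul' k (S := A)
              (LinearMap.rTensor A (Submodule.subtype (J.restrictScalars k)) t)) ⊗ₜ[k] (1 : A),
        pf _⟩ : ↥I) ⊗ₜ[A ⊗[k] A] (1 : (A ⧸ J) ⊗[k] A) = 0 := by
    intro t
    induction t using TensorProduct.induction_on with
    | zero =>
        have h0 : (⟨LinearMap.rTensor A (Submodule.subtype (J.restrictScalars k)) 0
            - (Algebra.TensorProduct.lmul' k (S := A)
                (LinearMap.rTensor A (Submodule.subtype (J.restrictScalars k)) 0)) ⊗ₜ[k] (1 : A),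
          pf _⟩ : ↥I) = 0 := Subtype.ext (by simp)
        rw [h0]
        simp
    | tmul j a =>
        have hmem2 : (1 : A) ⊗ₜ[k] a - a ⊗ₜ[k] (1 : A) ∈ I := by
          rw [hI, RingHom.mem_ker, map_sub, Algebra.TensorProduct.lmul'_apply_tmul,
            Algebra.TensorProduct.lmul'_apply_tmul, one_mul, mul_one, sub_self]
        have h1 : (⟨LinearMap.rTensor A (Submodule.subtype (J.restrictScalars k)) (j ⊗ₜ a)
            - (Algebra.TensorProduct.lmul' k (S := A)
                (LinearMap.rTensor A (Submodule.subtype (J.restrictScalars k)) (j ⊗ₜ a)))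
                ⊗ₜ[k] (1 : A), pf _⟩ : ↥I)
            = ((j : A) ⊗ₜ[k] (1 : A) : A ⊗[k] A) •
              (⟨(1 : A) ⊗ₜ[k] a - a ⊗ₜ[k] (1 : A), hmem2⟩ : ↥I) := by
          apply Subtype.ext
          rw [Submodule.coe_smul, smul_eq_mul, mul_sub]
          simp [LinearMap.rTensor_tmul, Algebra.TensorProduct.lmul'_apply_tmul,
            Algebra.TensorProduct.tmul_mul_tmul, mul_one, one_mul]
        rw [h1, smul_tmul]
        have h2 : (((j : A) ⊗ₜ[k] (1 : A) : A ⊗[k] A)) • (1 : (A ⧸ J) ⊗[k] A) = 0 := by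
          rw [hsmul, mul_one, Algebra.TensorProduct.map_tmul]
          have hj : Ideal.Quotient.mkₐ k J (j : A) = 0 :=
            Ideal.Quotient.eq_zero_iff_mem.mpr j.2
          rw [hj]
          simp
        rw [h2, tmul_zero]
    | add x y hx hy =>
        have h3 : (⟨LinearMap.rTensor A (Submodule.subtype (J.restrictScalars k)) (x + y)
            - (Algebra.TensorProduct.lmul' k (S := A)
                (LinearMap.rTensor A (Submodule.subtype (J.restrictScalars k)) (x + y)))
                ⊗ₜ[k] (1 : A), pf _⟩ : ↥I)
            = ⟨LinearMap.rTensor A (Submodule.subtype (J.restrictScalars k)) x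
                - (Algebra.TensorProduct.lmul' k (S := A)
                    (LinearMap.rTensor A (Submodule.subtype (J.restrictScalars k)) x))
                    ⊗ₜ[k] (1 : A), pf _⟩
              + ⟨LinearMap.rTensor A (Submodule.subtype (J.restrictScalars k)) y
                - (Algebra.TensorProduct.lmul' k (S := A)
                    (LinearMap.rTensor A (Submodule.subtype (J.restrictScalars k)) y))
                    ⊗ₜ[k] (1 : A), pf _⟩ := by
          apply Subtype.ext
          rw [Submodule.coe_add]
          simp only [map_add, add_tmul]
          abel
        rw [h3, add_tmul, hx, hy, add_zero]
  -- vanishing for x ∈ I with f' x = 0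
  have vanish : ∀ x : ↥I,
      Algebra.TensorProduct.map (Ideal.Quotient.mkₐ k J) (AlgHom.id k A) (x : A ⊗[k] A) = 0 →
      x ⊗ₜ[A ⊗[k] A] (1 : (A ⧸ J) ⊗[k] A) = 0 := by
    rintro ⟨x, hx⟩ hfx
    have hker : (LinearMap.rTensor A (Ideal.Quotient.mkₐ k J).toLinearMap) x = 0 := by
      rw [hf'rt]; exact hfx
    obtain ⟨t, ht⟩ := (hex2 x).mp hker
    have hμx : Algebra.TensorProduct.lmul' k (S := A) x = 0 := by
      have h := hx
      rw [hI] at h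
      rwa [RingHom.mem_ker] at h
    have hxeq : (⟨x, hx⟩ : ↥I)
        = ⟨LinearMap.rTensor A (Submodule.subtype (J.restrictScalars k)) t
            - (Algebra.TensorProduct.lmul' k (S := A)
                (LinearMap.rTensor A (Submodule.subtype (J.restrictScalars k)) t)) ⊗ₜ[k] (1 : A),
          pf _⟩ := by
      refine Subtype.ext ?_
      simp [ht, hμx]
    rw [hxeq]
    exact key t
  constructor
  · rw [injective_iff_map_eq_zero]
    intro t ht
    obtain ⟨x, rfl⟩ := gen t
    apply vanish
    have h := hθt x 1
    rw [mul_one] at h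
    rw [← h]
    exact ht
  · intro y
    constructor
    · intro hy
      rw [RingHom.mem_ker] at hy
      obtain ⟨r, rfl⟩ := hsurj y
      have hmk : Ideal.Quotient.mk J (Algebra.TensorProduct.lmul' k (S := A) r) = 0 := by
        rw [← hcomm]; exact hy
      refine ⟨(⟨r - (Algebra.TensorProduct.lmul' k (S := A) r) ⊗ₜ[k] (1 : A), pf r⟩ : ↥I)
        ⊗ₜ[A ⊗[k] A] (1 : (A ⧸ J) ⊗[k] A), ?_⟩
      rw [hθt, mul_one, map_sub]
      have hz : Algebra.TensorProduct.map (Ideal.Quotient.mkₐ k J) (AlgHom.id k A)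
          ((Algebra.TensorProduct.lmul' k (S := A) r) ⊗ₜ[k] (1 : A)) = 0 := by
        rw [Algebra.TensorProduct.map_tmul]
        have : Ideal.Quotient.mkₐ k J (Algebra.TensorProduct.lmul' k (S := A) r) = 0 := by
          rw [Ideal.Quotient.mkₐ_eq_mk]; exact hmk
        rw [this]
        simp
      rw [hz, sub_zero]
    · rintro ⟨s, rfl⟩
      obtain ⟨⟨v, hv⟩, rfl⟩ := gen s
      rw [RingHom.mem_ker, hθt, mul_one, hcomm]
      rw [hI, RingHom.mem_ker] at hv
      rw [show ((⟨v, by rw [hI, RingHom.mem_ker]; exact hv⟩ : ↥I) : A ⊗[k] A) = v from rfl, hv,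
        map_zero]
end

section
/- Let k be a field and let A, B be commutative k-algebras. In R = (A ⊗_k A) ⊗_k (B ⊗_k B), let 𝔞 be the ideal generated by the image of I_A ⊗_k (B ⊗_k B) and let 𝔟 be the ideal generated by the image of (A ⊗_k A) ⊗_k I_B, where I_A = ker(μ_A : A ⊗ A → A) and I_B = ker(μ_B : B ⊗ B → B). Let I be the multiplication kernel of A ⊗_k B regarded as an ideal of R via the middle-swap isomorphism. Then: (1) I = 𝔞 + 𝔟; and (2) 𝔞 ∩ 𝔟 = 𝔞 · 𝔟, and the multiplication map I_A ⊗_k I_B → R is injective with image 𝔞 ∩ 𝔟. -/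
/-!
Over a field every module is flat. By right exactness of `⊗`, the ideals `𝔞` and `𝔟` are the
kernels of `μ_A ⊗ id` and `id ⊗ μ_B`, and the kernel of `μ_A ⊗ μ_B`, which is the
multiplication of `A ⊗ B` read through the middle swap, is their sum. An element of `𝔞 ⊓ 𝔟`
lifts to `I_A ⊗ (B ⊗ B)`; its image in `I_A ⊗ B` vanishes because flatness of `B ≅ (B ⊗ B) ⧸ I_B`
makes `I_A ⊗ B → (A ⊗ A) ⊗ B` injective, so it comes from `I_A ⊗ I_B`, and
`ξ ⊗ η = (ξ ⊗ 1) (1 ⊗ η)` lies in `𝔞 𝔟`.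
-/

open TensorProduct LinearMap Algebra.TensorProduct

namespace TensorProduct

variable {R M N : Type*} [CommRing R] [AddCommGroup M] [AddCommGroup N] [Module R M] [Module R N]
  (p : Submodule R M) (q : Submodule R N)

theorem range_rTensor_subtype_inf_range_lTensor_subtype [Module.Flat R (N ⧸ q)] :
    range (rTensor N p.subtype) ⊓ range (lTensor M q.subtype) = range (mapIncl p q) := by
  refine le_antisymm ?_ fun x hx => ⟨?_, ?_⟩
  · rintro x ⟨⟨y, rfl⟩, hx⟩
    have hy : rTensor (N ⧸ q) p.subtype (lTensor p q.mkQ y) = 0 := by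
      rwa [← comp_apply, rTensor_comp_lTensor, ← lTensor_comp_rTensor, comp_apply, ← mem_ker,
        lTensor_mkQ]
    obtain ⟨z, rfl⟩ : y ∈ range (lTensor p q.subtype) := by
      rw [← lTensor_mkQ, mem_ker]
      exact (map_eq_zero_iff _
        (Module.Flat.rTensor_preserves_injective_linearMap _ p.injective_subtype)).mp hy
    exact ⟨z, by rw [mapIncl, ← rTensor_comp_lTensor, comp_apply]⟩
  · rw [mapIncl, ← rTensor_comp_lTensor] at hx
    exact range_comp_le_range _ _ hx
  · rw [mapIncl, ← lTensor_comp_rTensor] at hx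
    exact range_comp_le_range _ _ hx

end TensorProduct

namespace Ideal

variable {R C D : Type*} [CommRing R] [CommRing C] [CommRing D] [Algebra R C] [Algebra R D]
  (I : Ideal C) (J : Ideal D)

theorem span_tmul_eq_map_includeLeft :
    span {x : C ⊗[R] D | ∃ ξ ∈ I, ∃ d : D, x = ξ ⊗ₜ d} =
      I.map (includeLeft : C →ₐ[R] C ⊗[R] D) := by
  refine le_antisymm (span_le.mpr ?_) (map_le_iff_le_comap.mpr fun ξ hξ => ?_)
  · rintro _ ⟨ξ, hξ, d, rfl⟩
    rw [← mul_one ξ, ← one_mul d, ← tmul_mul_tmul]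
    exact mul_mem_right _ _ (mem_map_of_mem includeLeft hξ)
  · exact subset_span ⟨ξ, hξ, 1, rfl⟩

theorem span_tmul_eq_map_includeRight :
    span {x : C ⊗[R] D | ∃ c : C, ∃ η ∈ J, x = c ⊗ₜ η} =
      J.map (includeRight : D →ₐ[R] C ⊗[R] D) := by
  refine le_antisymm (span_le.mpr ?_) (map_le_iff_le_comap.mpr fun η hη => ?_)
  · rintro _ ⟨c, η, hη, rfl⟩
    rw [← mul_one c, ← one_mul η, ← tmul_mul_tmul]
    exact mul_mem_left _ _ (mem_map_of_mem includeRight hη)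
  · exact subset_span ⟨1, η, hη, rfl⟩

theorem map_includeLeft_inf_map_includeRight_eq [Module.Flat R (D ⧸ J)] :
    (I.map (includeLeft : C →ₐ[R] C ⊗[R] D) ⊓
        J.map (includeRight : D →ₐ[R] C ⊗[R] D)).restrictScalars R =
      range (mapIncl (I.restrictScalars R) (J.restrictScalars R)) := by
  -- `D ⧸ J.restrictScalars R` is `D ⧸ J` up to unfolding
  have : Module.Flat R (D ⧸ J.restrictScalars R) := ‹Module.Flat R (D ⧸ J)›
  rw [Submodule.restrictScalars_inf, map_includeLeft_eq, map_includeRight_eq,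
    range_rTensor_subtype_inf_range_lTensor_subtype]

theorem range_mapIncl_le_map_includeLeft_mul_map_includeRight :
    range (mapIncl (I.restrictScalars R) (J.restrictScalars R)) ≤
      (I.map (includeLeft : C →ₐ[R] C ⊗[R] D) *
        J.map (includeRight : D →ₐ[R] C ⊗[R] D)).restrictScalars R := by
  rintro _ ⟨z, rfl⟩
  induction z using TensorProduct.induction_on with
  | zero => simp
  | tmul ξ η =>
    rw [mapIncl, TensorProduct.map_tmul, Submodule.subtype_apply, Submodule.subtype_apply,
      ← mul_one ξ.1, ← one_mul η.1, ← tmul_mul_tmul]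
    exact mul_mem_mul (mem_map_of_mem includeLeft ξ.2) (mem_map_of_mem includeRight η.2)
  | add z w hz hw => rw [map_add]; exact add_mem hz hw

theorem map_includeLeft_inf_map_includeRight_eq_mul [Module.Flat R (D ⧸ J)] :
    I.map (includeLeft : C →ₐ[R] C ⊗[R] D) ⊓ J.map (includeRight : D →ₐ[R] C ⊗[R] D) =
      I.map (includeLeft : C →ₐ[R] C ⊗[R] D) * J.map (includeRight : D →ₐ[R] C ⊗[R] D) := by
  refine le_antisymm (fun x hx => ?_) mul_le_inf
  have hx' : x ∈ range (mapIncl (I.restrictScalars R) (J.restrictScalars R)) := by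
    rw [← map_includeLeft_inf_map_includeRight_eq]
    exact hx
  exact range_mapIncl_le_map_includeLeft_mul_map_includeRight I J hx'

end Ideal

namespace Algebra.TensorProduct

variable {R C D : Type*} [CommSemiring R] [CommSemiring C] [CommSemiring D] [Algebra R C]
  [Algebra R D]

theorem lmul'_surjective_s11 : Function.Surjective (lmul' R : C ⊗[R] C →ₐ[R] C) :=
  fun a => ⟨a ⊗ₜ 1, by simp⟩

theorem map_lmul'_comp_tensorTensorTensorComm :
    (map (lmul' R (S := C)) (lmul' R (S := D))).comp
      (tensorTensorTensorComm R R R R C D C D).toAlgHom = lmul' R (S := C ⊗[R] D) := by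
  ext <;> simp [tensorTensorTensorComm_tmul, one_def]

theorem map_ker_lmul'_tensorTensorTensorComm :
    (RingHom.ker (lmul' R (S := C ⊗[R] D))).map (tensorTensorTensorComm R R R R C D C D) =
      RingHom.ker (map (lmul' R (S := C)) (lmul' R (S := D))) := by
  rw [← map_lmul'_comp_tensorTensorTensorComm, ← AlgHom.comap_ker]
  exact Ideal.map_comap_of_surjective _ (tensorTensorTensorComm R R R R C D C D).surjective _

end Algebra.TensorProduct

variable (k : Type*) [Field k]
variable (A : Type*) [CommRing A] [Algebra k A]
variable (B : Type*) [CommRing B] [Algebra k B]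

/-- Let `k` be a field and `A`, `B` commutative `k`-algebras.  In
`R = (A ⊗ A) ⊗ (B ⊗ B)`, let `𝔞` be the ideal generated by the image of `I_A ⊗ (B ⊗ B)` and
`𝔟` the ideal generated by the image of `(A ⊗ A) ⊗ I_B`, where `I_A`, `I_B` are the kernels of
the multiplication maps.  Let `I` be the multiplication kernel of `A ⊗ B`, regarded as an ideal
of `R` via the middle-swap isomorphism.  Then (1) `I = 𝔞 + 𝔟`, and (2) `𝔞 ⊓ 𝔟 = 𝔞 * 𝔟` and the
multiplication map `I_A ⊗_k I_B → R` is injective with image `𝔞 ⊓ 𝔟`. -/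
theorem diagonal_ideal_sum_and_transverse_intersection
    (IA : Ideal (A ⊗[k] A)) (hIA : IA = RingHom.ker (Algebra.TensorProduct.lmul' k (S := A)))
    (IB : Ideal (B ⊗[k] B)) (hIB : IB = RingHom.ker (Algebra.TensorProduct.lmul' k (S := B)))
    (I : Ideal ((A ⊗[k] A) ⊗[k] (B ⊗[k] B)))
    (hI : I = Ideal.map (Algebra.TensorProduct.tensorTensorTensorComm k k k k A B A B)
      (RingHom.ker (Algebra.TensorProduct.lmul' k (S := A ⊗[k] B))))
    (𝔞 : Ideal ((A ⊗[k] A) ⊗[k] (B ⊗[k] B)))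
    (h𝔞 : 𝔞 = Ideal.span
      {x : (A ⊗[k] A) ⊗[k] (B ⊗[k] B) | ∃ ξ ∈ IA, ∃ β : B ⊗[k] B, x = ξ ⊗ₜ[k] β})
    (𝔟 : Ideal ((A ⊗[k] A) ⊗[k] (B ⊗[k] B)))
    (h𝔟 : 𝔟 = Ideal.span
      {x : (A ⊗[k] A) ⊗[k] (B ⊗[k] B) | ∃ α : A ⊗[k] A, ∃ η ∈ IB, x = α ⊗ₜ[k] η})
    (mult : (↥IA ⊗[k] ↥IB) →ₗ[k] (A ⊗[k] A) ⊗[k] (B ⊗[k] B))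
    (hmult : mult = TensorProduct.map ((Submodule.subtype IA).restrictScalars k)
      ((Submodule.subtype IB).restrictScalars k)) :
    I = 𝔞 + 𝔟 ∧
    𝔞 ⊓ 𝔟 = 𝔞 * 𝔟 ∧
    Function.Injective mult ∧
    (∀ x : (A ⊗[k] A) ⊗[k] (B ⊗[k] B), x ∈ 𝔞 ⊓ 𝔟 ↔ x ∈ LinearMap.range mult) := by
  rw [Ideal.span_tmul_eq_map_includeLeft] at h𝔞
  rw [Ideal.span_tmul_eq_map_includeRight] at h𝔟
  rw [map_ker_lmul'_tensorTensorTensorComm] at hI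
  subst h𝔞 h𝔟 hI hmult
  refine ⟨?_, ?_, ?_, ?_⟩
  · rw [Submodule.add_eq_sup]
    subst hIA hIB
    exact Algebra.TensorProduct.map_ker _ _ lmul'_surjective_s11 lmul'_surjective_s11
  · exact Ideal.map_includeLeft_inf_map_includeRight_eq_mul IA IB
  · exact Module.Flat.tensorProduct_mapIncl_injective_of_right (IA.restrictScalars k)
      (IB.restrictScalars k)
  · exact SetLike.ext_iff.mp (Ideal.map_includeLeft_inf_map_includeRight_eq IA IB)
end

section
/- Let k be a field, let A be a commutative k-algebra, and let J ⊆ A be an ideal. Let I = ker(μ_A : A ⊗_k A → A) and regard J ⊗_k A as a submodule (in fact an ideal) of A ⊗_k A. Then I ∩ (J ⊗_k A) = (J ⊗_k A) · I as submodules of A ⊗_k A. -/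
open TensorProduct

variable (k : Type*) [Field k]
variable (A : Type*) [CommRing A] [Algebra k A]
variable (J : Ideal A)

/-!
The composite `ψ : x ↦ μ(x) ⊗ 1` is an idempotent ring endomorphism of `A ⊗ A` with kernel
`I = ker μ`, and `J ⊗ A` is generated by the `ψ`-fixed tensors `j ⊗ 1`. For an idempotent `ψ`
every `x - ψ x` lies in `ker ψ`, so for a generator `g = ψ g` and any `r` we get
`r g - ψ (r g) = (r - ψ r) g ∈ ker ψ · L`; hence `y - ψ y ∈ L · ker ψ` for all `y` in the ideal
`L` generated by fixed points, and `y = y - ψ y` when `y ∈ ker ψ`.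
-/

namespace RingHom

variable {S : Type*} [CommRing S] (ψ : S →+* S)

theorem sub_self_apply_mem_ker_of_idempotent (hψ : ∀ x, ψ (ψ x) = ψ x) (x : S) :
    x - ψ x ∈ ker ψ := by
  simp [mem_ker, hψ]

theorem sub_self_apply_mem_span_mul_ker {G : Set S} (hψ : ∀ x, ψ (ψ x) = ψ x)
    (hG : ∀ g ∈ G, ψ g = g) {y : S} (hy : y ∈ Ideal.span G) :
    y - ψ y ∈ Ideal.span G * ker ψ := by
  induction hy using Submodule.span_induction with
  | mem g hg => simp [hG g hg]
  | zero => simp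
  | add x y _ _ hx hy => simpa [add_sub_add_comm] using Ideal.add_mem _ hx hy
  | smul r y hy_mem hy =>
    have hdecomp : r * y - ψ (r * y) = ψ r * (y - ψ y) + y * (r - ψ r) := by
      rw [map_mul]; ring
    rw [smul_eq_mul, hdecomp]
    exact Ideal.add_mem _ (Ideal.mul_mem_left _ _ hy)
      (Ideal.mul_mem_mul hy_mem (sub_self_apply_mem_ker_of_idempotent ψ hψ r))

theorem ker_inf_span_eq_span_mul_ker {G : Set S} (hψ : ∀ x, ψ (ψ x) = ψ x)
    (hG : ∀ g ∈ G, ψ g = g) : ker ψ ⊓ Ideal.span G = Ideal.span G * ker ψ := by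
  refine le_antisymm (fun y ⟨hy_ker, hy_span⟩ => ?_) (mul_comm (ker ψ) _ ▸ Ideal.mul_le_inf)
  simpa [(mem_ker).mp hy_ker] using sub_self_apply_mem_span_mul_ker ψ hψ hG hy_span

end RingHom

namespace Algebra.TensorProduct

variable (R S : Type*) [CommRing R] [CommRing S] [Algebra R S]

noncomputable def lmulTmulOne : S ⊗[R] S →+* S ⊗[R] S :=
  (includeLeft : S →ₐ[R] S ⊗[R] S).toRingHom.comp (lmul' R (S := S)).toRingHom

theorem lmulTmulOne_tmul_one (s : S) : lmulTmulOne R S (s ⊗ₜ 1) = s ⊗ₜ 1 := by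
  simp [lmulTmulOne]

theorem lmulTmulOne_idempotent (x : S ⊗[R] S) :
    lmulTmulOne R S (lmulTmulOne R S x) = lmulTmulOne R S x := by
  simp [lmulTmulOne]

theorem ker_lmulTmulOne : RingHom.ker (lmulTmulOne R S) = RingHom.ker (lmul' R (S := S)) := by
  refine RingHom.ker_comp_of_injective _ (Function.LeftInverse.injective (g := lmul' R) ?_)
  intro s
  simp

theorem span_tmul_eq_span_tmul_one (J : Ideal S) :
    Ideal.span {x : S ⊗[R] S | ∃ j ∈ J, ∃ a : S, x = j ⊗ₜ[R] a} =
      Ideal.span {x : S ⊗[R] S | ∃ j ∈ J, x = j ⊗ₜ[R] 1} := by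
  refine le_antisymm (Ideal.span_le.mpr ?_)
    (Ideal.span_mono fun x ⟨j, hj, hx⟩ => ⟨j, hj, 1, hx⟩)
  rintro _ ⟨j, hj, a, rfl⟩
  have hfactor : j ⊗ₜ[R] a = (1 ⊗ₜ a) * (j ⊗ₜ[R] (1 : S)) := by simp
  rw [hfactor]
  exact Ideal.mul_mem_left _ _ (Ideal.subset_span ⟨j, hj, rfl⟩)

end Algebra.TensorProduct

/-- Let `k` be a field, `A` a commutative `k`-algebra and `J ⊆ A` an ideal.
Let `I = ker (μ_A : A ⊗_k A → A)` and regard `J ⊗_k A` as the ideal of `A ⊗_k A` generated by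
the tensors `j ⊗ a` with `j ∈ J`.  Then `I ∩ (J ⊗_k A) = (J ⊗_k A) · I` as submodules
(ideals) of `A ⊗_k A`. -/
theorem inf_mulKer_eq_mul
    (I : Ideal (A ⊗[k] A)) (hI : I = RingHom.ker (Algebra.TensorProduct.lmul' k (S := A)))
    (JA : Ideal (A ⊗[k] A))
    (hJA : JA = Ideal.span {x : A ⊗[k] A | ∃ j ∈ J, ∃ a : A, x = j ⊗ₜ[k] a}) :
    I ⊓ JA = JA * I := by
  rw [hI, hJA, Algebra.TensorProduct.span_tmul_eq_span_tmul_one,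
    ← Algebra.TensorProduct.ker_lmulTmulOne]
  exact RingHom.ker_inf_span_eq_span_mul_ker _ (Algebra.TensorProduct.lmulTmulOne_idempotent k A)
    fun _ ⟨j, _, hx⟩ => hx ▸ Algebra.TensorProduct.lmulTmulOne_tmul_one k A j
end
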